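/- Let a, b > 0 and define Q_{a,b}^{[3]}(x) := 1/(a+1)² + (a(a+2)/(a+1)²) (1 − (a+1)x/(a+2))^{b−1} for x ∈ (0,1). Then for all x ∈ (0,1): if b ∈ (0,1] ∪ [2,3] then Q_{a,b}(x) ≥ Q_{a,b}^{[3]}(x), and if b ∈ [1,2] ∪ [3,∞) then Q_{a,b}(x) ≤ Q_{a,b}^{[3]}(x). -/

import Mathlib

/-!
`Q a b x` integrates `f y = (1 - x y)^(b-1)` against the weight `a y^(a-1)` on `[0, 1]`, and the
comparison function is the two-point Gauss–Radau rule for this weight with fixed node `0` and free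
node `c = (a+1)/(a+2)`, which integrates quadratics exactly. Subtracting from `f` the quadratic `p`
that agrees with `f` at `0` and to first order at `c`, the error of the rule is the weighted
integral of `f - p`. If `f'` is convex, Rolle's theorem and convexity force `f - p ≥ 0` on
`[0, 1]`; if `f'` is concave, `f - p ≤ 0`. Since `f''' = -x³ (b-1)(b-2)(b-3) (1 - x y)^(b-4)`, the
convexity of `f'` is decided by the sign of `(b-1)(b-2)(b-3)`, which gives the two ranges of `b`.
-/

open MeasureTheory

/-- The auxiliary function `Q_{a,b}(x) = a ∫₀¹ y^(a-1) (1-xy)^(b-1) dy`. -/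
noncomputable def Q (a b x : ℝ) : ℝ :=
  a * ∫ y in (0:ℝ)..1, y ^ (a - 1) * (1 - x * y) ^ (b - 1)

open Set intervalIntegral

theorem nonneg_of_convexOn_deriv {g g' : ℝ → ℝ} {u c v : ℝ} (huc : u < c) (hcv : c ≤ v)
    (hg : ∀ y ∈ Icc u v, HasDerivAt g (g' y) y) (hg' : ConvexOn ℝ (Icc u v) g')
    (hgu : g u = 0) (hgc : g c = 0) (hg'c : g' c = 0) : ∀ y ∈ Icc u v, 0 ≤ g y := by
  have hcont : ContinuousOn g (Icc u v) := fun y hy => (hg y hy).continuousAt.continuousWithinAt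
  have monotone_of_nonneg : ∀ {p q}, u ≤ p → q ≤ v → (∀ y ∈ Icc p q, 0 ≤ g' y) →
      MonotoneOn g (Icc p q) := fun hp hq h =>
    monotoneOn_of_hasDerivWithinAt_nonneg (convex_Icc _ _) (hcont.mono (Icc_subset_Icc hp hq))
      (fun y hy => (hg y (Icc_subset_Icc hp hq (interior_subset hy))).hasDerivWithinAt)
      (fun y hy => h y (interior_subset hy))
  -- Rolle's theorem gives a second zero of `g'`, to the left of `c`
  obtain ⟨ξ, hξ, hg'ξ⟩ := exists_hasDerivAt_eq_zero huc (hcont.mono (Icc_subset_Icc le_rfl hcv))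
    (hgu.trans hgc.symm) (fun y hy => hg y ⟨hy.1.le, hy.2.le.trans hcv⟩)
  have hξmem : ξ ∈ Icc u v := ⟨hξ.1.le, hξ.2.le.trans hcv⟩
  have hcmem : c ∈ Icc u v := ⟨huc.le, hcv⟩
  have hg'_mid : ∀ y ∈ Icc ξ c, g' y ≤ 0 := fun y hy => by
    simpa [hg'ξ, hg'c] using hg'.le_on_segment hξmem hcmem (by rwa [segment_eq_Icc hξ.2.le])
  have hg'_left : ∀ y ∈ Icc u ξ, 0 ≤ g' y := by
    rintro y ⟨hyu, hyξ⟩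
    rcases hyξ.eq_or_lt with rfl | hlt
    · exact hg'ξ.ge
    · rw [← hg'ξ]
      exact hg'.le_left_of_right_le ⟨hyu, hyξ.trans hξmem.2⟩ hcmem
        (by rw [openSegment_eq_Ioo (hlt.trans hξ.2)]; exact ⟨hlt, hξ.2⟩) (by rw [hg'ξ, hg'c])
  have hg'_right : ∀ y ∈ Icc c v, 0 ≤ g' y := by
    rintro y ⟨hcy, hyv⟩
    rcases hcy.eq_or_lt with rfl | hlt
    · exact hg'c.ge
    · rw [← hg'c]
      exact hg'.le_right_of_left_le hξmem ⟨huc.le.trans hcy, hyv⟩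
        (by rw [openSegment_eq_Ioo (hξ.2.trans hlt)]; exact ⟨hξ.2, hlt⟩) (by rw [hg'ξ, hg'c])
  rintro y ⟨hyu, hyv⟩
  rcases le_total y ξ with hyξ | hξy
  · exact hgu ▸ monotone_of_nonneg le_rfl hξmem.2 hg'_left ⟨le_rfl, hξ.1.le⟩ ⟨hyu, hyξ⟩ hyu
  rcases le_total y c with hyc | hcy
  · have hanti : AntitoneOn g (Icc ξ c) :=
      antitoneOn_of_hasDerivWithinAt_nonpos (convex_Icc _ _)
        (hcont.mono (Icc_subset_Icc hξ.1.le hcv))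
        (fun y hy => (hg y (Icc_subset_Icc hξ.1.le hcv (interior_subset hy))).hasDerivWithinAt)
        (fun y hy => hg'_mid y (interior_subset hy))
    exact hgc ▸ hanti ⟨hξy, hyc⟩ ⟨hξ.2.le, le_rfl⟩ hyc
  · exact hgc ▸ monotone_of_nonneg hcmem.1 le_rfl hg'_right ⟨le_rfl, hcv⟩ ⟨hcy, hyv⟩ hcy

theorem integral_rpow_sub_one_mul_pow {a : ℝ} (ha : 0 < a) (k : ℕ) :
    ∫ y in (0:ℝ)..1, y ^ (a - 1) * y ^ k = 1 / (a + k) := by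
  have hpos : 0 < a + k := by positivity
  have hEq : EqOn (fun y : ℝ => y ^ (a - 1) * y ^ k) (fun y => y ^ (a - 1 + k)) (uIcc 0 1) := by
    intro y hy
    rcases k with _ | n
    · simp
    · exact (Real.rpow_add_natCast' (by simp_all [uIcc_of_le]) (by push_cast; linarith)).symm
  rw [integral_congr hEq, integral_rpow (Or.inl (by linarith)),
    show a - 1 + k + 1 = a + k by ring, Real.one_rpow, Real.zero_rpow hpos.ne', sub_zero]

/-- The two-point Gauss–Radau rule for the weight `a * y ^ (a - 1)` on `[0, 1]`, with fixed
node `0`. -/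
noncomputable def radauRule (a : ℝ) (f : ℝ → ℝ) : ℝ :=
  f 0 / (a + 1) ^ 2 + a * (a + 2) / (a + 1) ^ 2 * f ((a + 1) / (a + 2))

theorem radauRule_quadratic {a : ℝ} (ha : 0 < a) (α β γ : ℝ) :
    a * ∫ y in (0:ℝ)..1, y ^ (a - 1) * (α + β * y + γ * y ^ 2)
      = radauRule a (fun y => α + β * y + γ * y ^ 2) := by
  have hint : ∀ k : ℕ, IntervalIntegrable (fun y : ℝ => y ^ (a - 1) * y ^ k) volume 0 1 :=
    fun k => (intervalIntegrable_rpow' (by linarith)).mul_continuousOn (by fun_prop)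
  have hEq : (fun y : ℝ => y ^ (a - 1) * (α + β * y + γ * y ^ 2))
      = fun y => α * (y ^ (a - 1) * y ^ 0) + β * (y ^ (a - 1) * y ^ 1)
          + γ * (y ^ (a - 1) * y ^ 2) := by
    ext y; ring
  rw [hEq, integral_add (((hint 0).const_mul α).add ((hint 1).const_mul β))
    ((hint 2).const_mul γ), integral_add ((hint 0).const_mul α) ((hint 1).const_mul β)]
  simp only [intervalIntegral.integral_const_mul, integral_rpow_sub_one_mul_pow ha, radauRule]
  field_simp
  ring

theorem radauRule_le_integral {a : ℝ} {f f' : ℝ → ℝ} (ha : 0 < a)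
    (hf : ∀ y ∈ Icc (0:ℝ) 1, HasDerivAt f (f' y) y) (hf' : ConvexOn ℝ (Icc 0 1) f') :
    radauRule a f ≤ a * ∫ y in (0:ℝ)..1, y ^ (a - 1) * f y := by
  set c := (a + 1) / (a + 2)
  have hc0 : 0 < c := by positivity
  have hc1 : c ≤ 1 := (div_le_one (by linarith)).2 (by linarith)
  -- the quadratic with `p 0 = f 0`, `p c = f c` and `p' c = f' c`
  set γ := (c * f' c - f c + f 0) / c ^ 2
  set β := f' c - 2 * γ * c
  set p : ℝ → ℝ := fun y => f 0 + β * y + γ * y ^ 2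
  have hpc : p c = f c := by simp only [p, β, γ]; field_simp; ring
  have hg : ∀ y ∈ Icc (0:ℝ) 1, HasDerivAt (fun y => f y - p y) (f' y - (β + 2 * γ * y)) y := by
    intro y hy
    have hp : HasDerivAt p (β + 2 * γ * y) y :=
      ((((hasDerivAt_id y).const_mul β).const_add (f 0)).fun_add
        ((hasDerivAt_pow 2 y).const_mul γ)).congr_deriv (by simp; ring)
    exact (hf y hy).sub hp
  have hg' : ConvexOn ℝ (Icc 0 1) (fun y => f' y - (β + 2 * γ * y)) := by
    refine ⟨convex_Icc 0 1, fun y hy z hz s t hs ht hst => ?_⟩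
    have := hf'.2 hy hz hs ht hst
    simp only [smul_eq_mul] at this ⊢
    linear_combination this + β * hst
  have hnonneg := nonneg_of_convexOn_deriv hc0 hc1 hg hg' (by simp [p]) (by simp [hpc])
    (by simp only [β]; ring)
  have hfc : ContinuousOn f (uIcc 0 1) := fun y hy =>
    (hf y (by rwa [uIcc_of_le zero_le_one] at hy)).continuousAt.continuousWithinAt
  have hint : ∀ {h : ℝ → ℝ}, ContinuousOn h (uIcc 0 1) →
      IntervalIntegrable (fun y => y ^ (a - 1) * h y) volume 0 1 :=
    fun hh => (intervalIntegrable_rpow' (by linarith)).mul_continuousOn hh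
  have hsplit : (∫ y in (0:ℝ)..1, y ^ (a - 1) * f y)
      = (∫ y in (0:ℝ)..1, y ^ (a - 1) * (f y - p y)) + ∫ y in (0:ℝ)..1, y ^ (a - 1) * p y := by
    have hpcont : ContinuousOn p (uIcc 0 1) := by fun_prop
    rw [← integral_add (hint (h := fun y => f y - p y) (hfc.sub hpcont)) (hint hpcont)]
    simp only [← mul_add, sub_add_cancel]
  have hrem : 0 ≤ ∫ y in (0:ℝ)..1, y ^ (a - 1) * (f y - p y) :=
    integral_nonneg zero_le_one fun y hy =>
      mul_nonneg (Real.rpow_nonneg hy.1 _) (hnonneg y hy)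
  have hexact : a * ∫ y in (0:ℝ)..1, y ^ (a - 1) * p y = radauRule a f := by
    rw [radauRule_quadratic ha, radauRule, radauRule, ← hpc]
    simp [p, c]
  rw [hsplit, mul_add, hexact]
  linarith [mul_nonneg ha.le hrem]

theorem integral_le_radauRule {a : ℝ} {f f' : ℝ → ℝ} (ha : 0 < a)
    (hf : ∀ y ∈ Icc (0:ℝ) 1, HasDerivAt f (f' y) y) (hf' : ConcaveOn ℝ (Icc 0 1) f') :
    a * ∫ y in (0:ℝ)..1, y ^ (a - 1) * f y ≤ radauRule a f := by
  have := radauRule_le_integral ha (fun y hy => (hf y hy).neg) hf'.neg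
  simp only [radauRule, Pi.neg_apply, mul_neg, neg_div, intervalIntegral.integral_neg] at this ⊢
  linarith

theorem one_sub_mul_pos_of_mem_Icc {x y : ℝ} (hx : x < 1) (hy : y ∈ Icc (0:ℝ) 1) :
    0 < 1 - x * y := by
  rcases le_or_gt x 0 with h | h
  · nlinarith [mul_nonpos_of_nonpos_of_nonneg h hy.1]
  · nlinarith [mul_le_of_le_one_right h.le hy.2]

theorem hasDerivAt_one_sub_mul_rpow {x y : ℝ} (c : ℝ) (h : 0 < 1 - x * y) :
    HasDerivAt (fun y => (1 - x * y) ^ c) (-(x * c) * (1 - x * y) ^ (c - 1)) y := by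
  have hlin : HasDerivAt (fun y : ℝ => 1 - x * y) (-x) y := by
    simpa using ((hasDerivAt_id y).const_mul x).const_sub 1
  refine ((Real.hasDerivAt_rpow_const (p := c) (Or.inl h.ne')).comp y hlin).congr_deriv ?_
  ring

theorem convexOn_const_mul_one_sub_mul_rpow {x K c : ℝ} (hx : x < 1) (h : 0 ≤ K * c * (c - 1)) :
    ConvexOn ℝ (Icc 0 1) (fun y => K * (1 - x * y) ^ c) := by
  have hpos : ∀ y ∈ interior (Icc (0:ℝ) 1), 0 < 1 - x * y := fun y hy =>
    one_sub_mul_pos_of_mem_Icc hx (interior_subset hy)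
  refine convexOn_of_hasDerivWithinAt2_nonneg (convex_Icc 0 1)
    (f' := fun y => K * (-(x * c) * (1 - x * y) ^ (c - 1)))
    (f'' := fun y => K * (-(x * c) * (-(x * (c - 1)) * (1 - x * y) ^ (c - 1 - 1))))
    ?_ (fun y hy => ?_) (fun y hy => ?_) (fun y hy => ?_)
  · exact fun y hy => ((hasDerivAt_one_sub_mul_rpow c
      (one_sub_mul_pos_of_mem_Icc hx hy)).const_mul K).continuousAt.continuousWithinAt
  · exact ((hasDerivAt_one_sub_mul_rpow c (hpos y hy)).const_mul K).hasDerivWithinAt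
  · exact (((hasDerivAt_one_sub_mul_rpow (c - 1) (hpos y hy)).const_mul (-(x * c))).const_mul
      K).hasDerivWithinAt
  · have := Real.rpow_nonneg (hpos y hy).le (c - 1 - 1)
    have hx2 := sq_nonneg x
    calc (0:ℝ) ≤ K * c * (c - 1) * x ^ 2 * (1 - x * y) ^ (c - 1 - 1) := by positivity
      _ = _ := by ring

theorem concaveOn_const_mul_one_sub_mul_rpow {x K c : ℝ} (hx : x < 1) (h : K * c * (c - 1) ≤ 0) :
    ConcaveOn ℝ (Icc 0 1) (fun y => K * (1 - x * y) ^ c) := by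
  have hneg : (fun y => K * (1 - x * y) ^ c) = -fun y => -K * (1 - x * y) ^ c := by
    ext y
    simp
  rw [hneg]
  exact (convexOn_const_mul_one_sub_mul_rpow hx (by linarith)).neg

theorem sub_one_mul_sub_two_mul_sub_three_nonpos {b : ℝ} (hb : b ≤ 1 ∨ (2 ≤ b ∧ b ≤ 3)) :
    (b - 1) * (b - 2) * (b - 3) ≤ 0 := by
  rcases hb with hb | ⟨hb2, hb3⟩
  · nlinarith [mul_nonneg (mul_nonneg (sub_nonneg.2 hb) (by linarith : (0:ℝ) ≤ 2 - b))
      (by linarith : (0:ℝ) ≤ 3 - b)]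
  · nlinarith [mul_nonneg (mul_nonneg (by linarith : (0:ℝ) ≤ b - 1) (sub_nonneg.2 hb2))
      (sub_nonneg.2 hb3)]

theorem sub_one_mul_sub_two_mul_sub_three_nonneg {b : ℝ} (hb : (1 ≤ b ∧ b ≤ 2) ∨ 3 ≤ b) :
    0 ≤ (b - 1) * (b - 2) * (b - 3) := by
  rcases hb with ⟨hb1, hb2⟩ | hb
  · nlinarith [mul_nonneg (mul_nonneg (sub_nonneg.2 hb1) (sub_nonneg.2 hb2))
      (by linarith : (0:ℝ) ≤ 3 - b)]
  · exact mul_nonneg (mul_nonneg (by linarith) (by linarith)) (sub_nonneg.2 hb)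

theorem beta_Q3_bounds (a b : ℝ) (ha : 0 < a)
    (x : ℝ) (hx : x ∈ Set.Ioo (0:ℝ) 1) :
    ((b ≤ 1 ∨ (2 ≤ b ∧ b ≤ 3)) →
      1 / (a + 1) ^ 2
        + a * (a + 2) / (a + 1) ^ 2 * (1 - (a + 1) * x / (a + 2)) ^ (b - 1) ≤ Q a b x) ∧
    (((1 ≤ b ∧ b ≤ 2) ∨ 3 ≤ b) →
      Q a b x ≤ 1 / (a + 1) ^ 2
        + a * (a + 2) / (a + 1) ^ 2 * (1 - (a + 1) * x / (a + 2)) ^ (b - 1)) := by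
  obtain ⟨hx0, hx1⟩ := hx
  have hf : ∀ y ∈ Icc (0:ℝ) 1, HasDerivAt (fun y => (1 - x * y) ^ (b - 1))
      (-(x * (b - 1)) * (1 - x * y) ^ (b - 1 - 1)) y :=
    fun y hy => hasDerivAt_one_sub_mul_rpow _ (one_sub_mul_pos_of_mem_Icc hx1 hy)
  have hR : radauRule a (fun y => (1 - x * y) ^ (b - 1))
      = 1 / (a + 1) ^ 2 + a * (a + 2) / (a + 1) ^ 2 * (1 - (a + 1) * x / (a + 2)) ^ (b - 1) := by
    simp only [radauRule, mul_zero, sub_zero, Real.one_rpow]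
    ring_nf
  rw [← hR]
  refine ⟨fun hb => radauRule_le_integral ha hf (convexOn_const_mul_one_sub_mul_rpow hx1 ?_),
    fun hb => integral_le_radauRule ha hf (concaveOn_const_mul_one_sub_mul_rpow hx1 ?_)⟩
  · nlinarith [mul_nonneg hx0.le (neg_nonneg.2 (sub_one_mul_sub_two_mul_sub_three_nonpos hb))]
  · nlinarith [mul_nonneg hx0.le (sub_one_mul_sub_two_mul_sub_three_nonneg hb)]
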